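/- arXiv:1909.11499 — 4 statements merged into one kernel-verified Lean document; each statement's English description precedes it below -/
import Mathlib

section
/- Let S be a smooth manifold, K a vector field on S, Ω a closed 2-form with K ⌟ Ω = dz_Ω for a nowhere-vanishing function z_Ω. Define the operator d_Ω on differential forms by d_Ω α = dα + z_Ω^{-1} Ω ∧ (K ⌟ α). Then d_Ω² α = z_Ω^{-1} Ω ∧ L_K α for every differential form α, where L_K is the Lie derivative. In particular d_Ω² α = 0 for every K-invariant form α. -/
/-- Swann's twisted differential.  Forms are modelled abstractly as an
`ℝ`-algebra `A` (with multiplication playing the role of the wedge product), equipped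
with the exterior derivative `d`, the contraction `ι = K ⌟ ·` with the vector field `K`,
and the Lie derivative `L = L_K`, subject to the usual Cartan calculus identities
(restricted to the degrees in which they are used: `z`, `zi = z⁻¹` are functions and
`Ω` is an even-degree (2-)form, hence central).  Given `dΩ = 0`, `ι Ω = dz` with `z`
nowhere vanishing (`zi * z = 1`), the operator `d_Ω α = dα + z⁻¹ Ω ∧ (K ⌟ α)` satisfies
`d_Ω² α = z⁻¹ Ω ∧ L_K α`; in particular `d_Ω² α = 0` for `K`-invariant `α`. -/
theorem stmt5 {A : Type*} [Ring A] [Algebra ℝ A]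
    (d ι L : A →ₗ[ℝ] A) (z zi Ω : A)
    (hz : zi * z = 1)
    (hzc : ∀ a : A, z * a = a * z) (hzic : ∀ a : A, zi * a = a * zi)
    (hΩc : ∀ a : A, Ω * a = a * Ω)
    (hd2 : ∀ a : A, d (d a) = 0)
    (hι2 : ∀ a : A, ι (ι a) = 0)
    (hCartan : ∀ a : A, L a = d (ι a) + ι (d a))
    (hdΩ : d Ω = 0)
    (hιΩ : ι Ω = d z)
    (hdzi : d zi = -((zi * zi) * d z))
    (hLeib_d_zi : ∀ a : A, d (zi * a) = d zi * a + zi * d a)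
    (hLeib_d_Ω : ∀ a : A, d (Ω * a) = d Ω * a + Ω * d a)
    (hLeib_ι_zi : ∀ a : A, ι (zi * a) = zi * ι a)
    (hLeib_ι_Ω : ∀ a : A, ι (Ω * a) = ι Ω * a + Ω * ι a)
    (D : A → A) (hD : ∀ a : A, D a = d a + zi * (Ω * ι a)) :
    ∀ a : A, D (D a) = zi * (Ω * L a) ∧ (L a = 0 → D (D a) = 0) := by
  intro a
  have c1 : Ω * (d z * ι a) = d z * (Ω * ι a) := by
    rw [← mul_assoc, hΩc (d z), mul_assoc]
  have c2 : Ω * (zi * (d z * ι a)) = zi * (Ω * (d z * ι a)) := by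
    rw [← mul_assoc, ← hzic Ω, mul_assoc]
  have e1 : d (zi * (Ω * ι a)) = -(zi * zi * d z) * (Ω * ι a) + zi * (Ω * d (ι a)) := by
    rw [hLeib_d_zi, hLeib_d_Ω, hdΩ, zero_mul, zero_add, hdzi]
  have e2 : ι (zi * (Ω * ι a)) = zi * (d z * ι a) := by
    rw [hLeib_ι_zi, hLeib_ι_Ω, hιΩ, hι2, mul_zero, add_zero]
  have key : D (D a) = zi * (Ω * L a) := by
    rw [hD, hD, map_add, map_add, hd2 a, e1, e2, hCartan, mul_add, mul_add, c2, c1]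
    simp only [mul_add, neg_mul, mul_assoc]
    abel
  exact ⟨key, fun h => by rw [key, h, mul_zero, mul_zero]⟩
end

section
/- In the setting of the twisted differential d_Ω (with dΩ = 0, K ⌟ Ω = dz_Ω, z_Ω nowhere zero), define the translation map τ_Ω(α) = α − (z_α / z_Ω) Ω for any closed 2-form α with K ⌟ α = dz_α. Then d_Ω(τ_Ω(α)) = 0. -/
/-- In the setting of the twisted differential `d_Ω` (forms modelled as an
abstract `ℝ`-algebra with exterior derivative `d` and contraction `ι = K ⌟ ·`, with
`dΩ = 0`, `ι Ω = dz`, `z` nowhere vanishing (`zi * z = 1`)), the translation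
`τ_Ω(α) = α − (z_α / z_Ω) Ω = α − (za * zi) * Ω` of a closed 2-form `α` with momentum
function `za` (`ι α = d za`) satisfies `d_Ω (τ_Ω α) = 0`. -/
theorem stmt6 {A : Type*} [Ring A] [Algebra ℝ A]
    (d ι : A →ₗ[ℝ] A) (z zi Ω α za : A)
    (hz : zi * z = 1)
    (hzic : ∀ a : A, zi * a = a * zi) (hzac : ∀ a : A, za * a = a * za)
    (hΩc : ∀ a : A, Ω * a = a * Ω)
    (hdΩ : d Ω = 0) (hιΩ : ι Ω = d z)
    (hdα : d α = 0) (hια : ι α = d za)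
    (hdzi : d zi = -((zi * zi) * d z))
    (hLeib_d : d ((za * zi) * Ω) = (d za * zi + za * d zi) * Ω + (za * zi) * d Ω)
    (hLeib_ι : ι ((za * zi) * Ω) = (za * zi) * ι Ω)
    (D : A → A) (hD : ∀ b : A, D b = d b + zi * (Ω * ι b)) :
    D (α - (za * zi) * Ω) = 0 := by
  rw [hD, map_sub, map_sub, hdα, hLeib_d, hdΩ, hια, hLeib_ι, hιΩ, hdzi]
  generalize d za = X
  generalize d z = Y
  simp only [mul_zero, add_zero, zero_sub, mul_sub, add_mul, mul_neg, neg_mul, neg_add, neg_neg]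
  have h1 : zi * (Ω * X) = X * zi * Ω := by rw [hΩc, ← mul_assoc, hzic]
  have h2 : zi * (Ω * (za * zi * Y)) = za * (zi * zi * Y) * Ω := by
    rw [hΩc, ← mul_assoc, ← mul_assoc, hzic, mul_assoc za zi zi, mul_assoc za (zi*zi) Y]
  rw [h1, h2]
  abel
end

section
/- Let z > 0 be a smooth positive function and let A, B : (0,∞) → (0,∞) be smooth. Suppose m ≥ 1, n ≥ 2 are integers and A, B satisfy the ODE m·A·B′(z) + (n−1)·B·A′(z) + m·z^{-1}·A·(A+B) = 0. Then for φ(z) := z·B(z)·A(z)^{(n-1)/m} one has the relation A(z)^{(m+n-1)/m} = −φ′(z); conversely, if φ : (0,∞) → (0,∞) is smooth with φ′ < 0 and one sets A = (−φ′)^{m/(m+n-1)} and B = z^{-1} A^{-(n-1)/m} φ, then (A,B) solves the ODE. -/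
/-!
Put `p = (n - 1) / m` and `φ = z B A^p`. The product rule gives
`φ' = z A^(p-1) (A B' + p B A' + z⁻¹ A (A + B)) - A^(p+1)`,
and the bracket is the balanced ODE divided by `m`. Hence the ODE holds exactly when
`φ' = -A^(p+1)`, which read in one direction is the first claim, and in the other, after solving
`A = (-φ')^(1/(p+1))` and `B = z⁻¹ A^(-p) φ`, is the converse.
-/

open Set Filter Topology

/-- The balanced ODE divided by `m`, with `p = (n - 1) / m`. -/
noncomputable def balancedResidual (p : ℝ) (A B : ℝ → ℝ) (z : ℝ) : ℝ :=
  A z * deriv B z + p * B z * deriv A z + z⁻¹ * A z * (A z + B z)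

theorem mul_balancedResidual {m : ℝ} (hm : m ≠ 0) (k : ℝ) (A B : ℝ → ℝ) (z : ℝ) :
    m * balancedResidual (k / m) A B z
      = m * A z * deriv B z + k * B z * deriv A z + m * z⁻¹ * A z * (A z + B z) := by
  unfold balancedResidual
  field_simp

theorem hasDerivAt_mul_mul_rpow {A B : ℝ → ℝ} {z : ℝ} (p : ℝ) (hz : z ≠ 0) (hAz : A z ≠ 0)
    (hA : DifferentiableAt ℝ A z) (hB : DifferentiableAt ℝ B z) :
    HasDerivAt (fun t => t * B t * A t ^ p)
      (z * A z ^ (p - 1) * balancedResidual p A B z - A z ^ (p + 1)) z := by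
  have hApow := hA.hasDerivAt.rpow_const (p := p) (Or.inl hAz)
  refine (((hasDerivAt_id' z).mul hB.hasDerivAt).mul hApow).congr_deriv ?_
  unfold balancedResidual
  have hApow_eq : A z ^ p = A z ^ (p - 1) * A z := by
    rw [← Real.rpow_add_one hAz, sub_add_cancel]
  rw [Real.rpow_add_one hAz, hApow_eq, Pi.mul_apply]
  field_simp
  ring

theorem deriv_mul_mul_rpow_of_balancedResidual_eq_zero {A B : ℝ → ℝ} {z p : ℝ} (hz : z ≠ 0)
    (hAz : A z ≠ 0) (hA : DifferentiableAt ℝ A z) (hB : DifferentiableAt ℝ B z)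
    (h : balancedResidual p A B z = 0) :
    deriv (fun t => t * B t * A t ^ p) z = -A z ^ (p + 1) := by
  rw [(hasDerivAt_mul_mul_rpow p hz hAz hA hB).deriv, h, mul_zero, zero_sub]

theorem balancedResidual_eq_zero_of_eventuallyEq {A B φ : ℝ → ℝ} {z p : ℝ} (hz : z ≠ 0)
    (hAz : 0 < A z) (hA : DifferentiableAt ℝ A z) (hB : DifferentiableAt ℝ B z)
    (hφ : (fun t => t * B t * A t ^ p) =ᶠ[𝓝 z] φ) (hφ' : deriv φ z = -A z ^ (p + 1)) :
    balancedResidual p A B z = 0 := by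
  have hderiv := (hasDerivAt_mul_mul_rpow p hz hAz.ne' hA hB).deriv
  rw [hφ.deriv_eq, hφ'] at hderiv
  have hprod : z * A z ^ (p - 1) * balancedResidual p A B z = 0 := by linarith
  have hApow : A z ^ (p - 1) ≠ 0 := (Real.rpow_pos_of_pos hAz _).ne'
  simpa [hz, hApow] using hprod

theorem balancedResidual_eq_zero_of_potential {φ : ℝ → ℝ} {z p : ℝ} (hp : p + 1 ≠ 0)
    (hz : 0 < z) (hφ : DifferentiableAt ℝ φ z) (hφ' : DifferentiableAt ℝ (deriv φ) z)
    (hneg : ∀ t ∈ Ioi (0 : ℝ), deriv φ t < 0) :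
    balancedResidual p (fun t => (-deriv φ t) ^ (p + 1)⁻¹)
      (fun t => t⁻¹ * ((-deriv φ t) ^ (p + 1)⁻¹) ^ (-p) * φ t) z = 0 := by
  set A : ℝ → ℝ := fun t => (-deriv φ t) ^ (p + 1)⁻¹
  have hApos : ∀ t ∈ Ioi (0 : ℝ), 0 < A t := fun t ht =>
    Real.rpow_pos_of_pos (neg_pos.2 (hneg t ht)) _
  have hA : DifferentiableAt ℝ A z :=
    hφ'.neg.rpow_const (Or.inl (neg_pos.2 (hneg z hz)).ne')
  have hB : DifferentiableAt ℝ (fun t => t⁻¹ * A t ^ (-p) * φ t) z :=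
    ((differentiableAt_inv hz.ne').mul (hA.rpow_const (Or.inl (hApos z hz).ne'))).mul hφ
  refine balancedResidual_eq_zero_of_eventuallyEq (φ := φ) hz.ne' (hApos z hz) hA hB ?_ ?_
  · filter_upwards [Ioi_mem_nhds hz] with t ht
    have hApow : A t ^ p ≠ 0 := (Real.rpow_pos_of_pos (hApos t ht) p).ne'
    rw [Real.rpow_neg (hApos t ht).le]
    field_simp [(mem_Ioi.mp ht).ne', hApow]
  · rw [Real.rpow_inv_rpow (neg_pos.2 (hneg z hz)).le hp, neg_neg]

/-- The ODE `m·A·B′ + (n−1)·B·A′ + m·z⁻¹·A·(A+B) = 0` on `(0,∞)`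
characterising balanced metrics of the Weinstein construction.  If positive `A`, `B`
solve it, then with `φ(z) = z·B(z)·A(z)^((n−1)/m)` one has
`A(z)^((m+n−1)/m) = −φ′(z)`; conversely, if `φ > 0` with `φ′ < 0` and one sets
`A = (−φ′)^(m/(m+n−1))`, `B = z⁻¹·A^(−(n−1)/m)·φ`, then `(A,B)` solves the ODE. -/
theorem stmt14 (m n : ℕ) (hm : 1 ≤ m) (hn : 2 ≤ n) :
    (∀ A B φ : ℝ → ℝ,
      (∀ z ∈ Ioi (0:ℝ), DifferentiableAt ℝ A z) →
      (∀ z ∈ Ioi (0:ℝ), DifferentiableAt ℝ B z) →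
      (∀ z ∈ Ioi (0:ℝ), 0 < A z) → (∀ z ∈ Ioi (0:ℝ), 0 < B z) →
      (∀ z ∈ Ioi (0:ℝ),
        (m : ℝ) * A z * deriv B z + ((n : ℝ) - 1) * B z * deriv A z
          + (m : ℝ) * z⁻¹ * A z * (A z + B z) = 0) →
      (φ = fun t : ℝ => t * B t * A t ^ (((n : ℝ) - 1) / (m : ℝ))) →
      ∀ z ∈ Ioi (0:ℝ), A z ^ (((m : ℝ) + (n : ℝ) - 1) / (m : ℝ)) = -(deriv φ z)) ∧
    (∀ φ A B : ℝ → ℝ,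
      (∀ z ∈ Ioi (0:ℝ), DifferentiableAt ℝ φ z) →
      (∀ z ∈ Ioi (0:ℝ), DifferentiableAt ℝ (deriv φ) z) →
      (∀ z ∈ Ioi (0:ℝ), 0 < φ z) →
      (∀ z ∈ Ioi (0:ℝ), deriv φ z < 0) →
      (A = fun t : ℝ => (-(deriv φ t)) ^ ((m : ℝ) / ((m : ℝ) + (n : ℝ) - 1))) →
      (B = fun t : ℝ => t⁻¹ * A t ^ (-(((n : ℝ) - 1) / (m : ℝ))) * φ t) →
      ∀ z ∈ Ioi (0:ℝ),
        (m : ℝ) * A z * deriv B z + ((n : ℝ) - 1) * B z * deriv A z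
          + (m : ℝ) * z⁻¹ * A z * (A z + B z) = 0) := by
  have hm0 : (m : ℝ) ≠ 0 := by positivity
  have hmn : (m : ℝ) + n - 1 ≠ 0 := by
    have : (1 : ℝ) ≤ m := by exact_mod_cast hm
    have : (2 : ℝ) ≤ n := by exact_mod_cast hn
    linarith
  have hexp : ((m : ℝ) + n - 1) / m = (n - 1) / m + 1 := by field_simp; ring
  refine ⟨fun A B φ hA hB hApos _ hODE hφ z hz => ?_,
    fun φ A B hφ hφ' _ hneg hA hB z hz => ?_⟩
  · have hres := hODE z hz
    rw [← mul_balancedResidual hm0, mul_eq_zero, or_iff_right hm0] at hres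
    subst hφ
    rw [hexp, deriv_mul_mul_rpow_of_balancedResidual_eq_zero (ne_of_gt hz) (hApos z hz).ne'
      (hA z hz) (hB z hz) hres, neg_neg]
  · have hinv : (m : ℝ) / (m + n - 1) = (((n : ℝ) - 1) / m + 1)⁻¹ := by rw [← hexp, inv_div]
    have hp : ((n : ℝ) - 1) / m + 1 ≠ 0 := hexp ▸ div_ne_zero hmn hm0
    rw [← mul_balancedResidual hm0]
    subst hA hB
    rw [hinv]
    exact mul_eq_zero_of_right _
      (balancedResidual_eq_zero_of_potential hp hz (hφ z hz) (hφ' z hz) hneg)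
end

section
/- Let (V, g, J) be a Hermitian vector space with fundamental 2-form ω = g(J·,·), let D₊ ⊕ D₋ = V be an orthogonal J-invariant splitting, θ ∈ V* a 1-form vanishing on D₋ with ζ = θ♯, and define for X, Y ∈ D₋: Q_X Y = (1/2)(g(X,Y)ζ + ω(X,Y)Jζ). Then Q_X ∈ End(V) extends (by Q_X(D₊) determined via skew-symmetry) to a g-skew-symmetric endomorphism commuting with J, and for all X, Y ∈ D₋ and V ∈ D₊: g(Q_X Y + Q_Y X, V) = θ(V) g(X,Y). -/
open scoped RealInnerProductSpace

/-- The conformal part of the intrinsic torsion.  On a Hermitian vector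
space `(V, g, J)` with fundamental form `ω = g(J·,·)`, an orthogonal `J`-invariant
splitting `V = D₊ ⊕ D₋`, and a 1-form `θ` vanishing on `D₋` with metric dual
`ζ = θ♯`, the prescription `Q_X Y = (1/2)(g(X,Y)ζ + ω(X,Y)Jζ)` on `D₋ × D₋` extends
to `g`-skew-symmetric endomorphisms `Q_X` commuting with `J`, and
`g(Q_X Y + Q_Y X, V) = θ(V) g(X,Y)` for `X, Y ∈ D₋`, `V ∈ D₊`. -/
theorem stmt18 {V : Type*} [NormedAddCommGroup V] [InnerProductSpace ℝ V]
    [FiniteDimensional ℝ V]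
    (J : V →ₗ[ℝ] V) (hJ2 : ∀ v, J (J v) = -v)
    (hJg : ∀ v w : V, ⟪J v, J w⟫ = ⟪v, w⟫)
    (Dp Dm : Submodule ℝ V) (hcompl : IsCompl Dp Dm)
    (horth : ∀ x ∈ Dp, ∀ y ∈ Dm, ⟪x, y⟫ = 0)
    (hJp : ∀ v ∈ Dp, J v ∈ Dp) (hJm : ∀ v ∈ Dm, J v ∈ Dm)
    (θ : V →ₗ[ℝ] ℝ) (hθm : ∀ y ∈ Dm, θ y = 0)
    (ζ : V) (hζ : ∀ v : V, θ v = ⟪ζ, v⟫) :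
    ∃ Q : V → V →ₗ[ℝ] V,
      (∀ X ∈ Dm, ∀ Y ∈ Dm,
        Q X Y = (1 / 2 : ℝ) • (⟪X, Y⟫ • ζ + ⟪J X, Y⟫ • J ζ)) ∧
      (∀ X ∈ Dm, ∀ u w : V, ⟪Q X u, w⟫ = -⟪u, Q X w⟫) ∧
      (∀ X ∈ Dm, ∀ u : V, Q X (J u) = J (Q X u)) ∧
      (∀ X ∈ Dm, ∀ Y ∈ Dm, ∀ v ∈ Dp,
        ⟪Q X Y + Q Y X, v⟫ = θ v * ⟪X, Y⟫) := by
  set Q : V → V →ₗ[ℝ] V := fun X =>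
    (1 / 2 : ℝ) • (((innerSL ℝ X).toLinearMap).smulRight ζ
      + ((innerSL ℝ (J X)).toLinearMap).smulRight (J ζ)
      - ((innerSL ℝ ζ).toLinearMap).smulRight X
      - ((innerSL ℝ (J ζ)).toLinearMap).smulRight (J X)) with hQ
  have hQapp : ∀ X u : V, Q X u =
      (1 / 2 : ℝ) • (⟪X, u⟫ • ζ + ⟪J X, u⟫ • J ζ - ⟪ζ, u⟫ • X - ⟪J ζ, u⟫ • J X) := by
    intro X u
    simp [hQ, LinearMap.smulRight_apply, sub_eq_add_neg]
  have hskew : ∀ v w : V, ⟪J v, w⟫ = -⟪v, J w⟫ := by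
    intro v w
    have h := hJg v (J w)
    rw [hJ2, inner_neg_right] at h
    linarith
  have hζm : ∀ y ∈ Dm, ⟪ζ, y⟫ = 0 := fun y hy => by rw [← hζ]; exact hθm y hy
  have hJζm : ∀ y ∈ Dm, ⟪J ζ, y⟫ = 0 := by
    intro y hy
    rw [hskew, hζm _ (hJm y hy), neg_zero]
  refine ⟨Q, ?_, ?_, ?_, ?_⟩
  · intro X hX Y hY
    rw [hQapp, hζm Y hY, hJζm Y hY]
    simp
  · intro X hX u w
    rw [hQapp, hQapp]
    simp only [inner_sub_left, inner_sub_right, inner_add_left, inner_add_right,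
      real_inner_smul_left, real_inner_smul_right]
    rw [real_inner_comm u ζ, real_inner_comm u (J ζ),
      real_inner_comm u X, real_inner_comm u (J X)]
    ring
  · intro X hX u
    rw [hQapp, hQapp]
    have e1 : ⟪X, J u⟫ = -⟪J X, u⟫ := by rw [hskew]; ring_nf
    have e2 : ⟪J X, J u⟫ = ⟪X, u⟫ := hJg X u
    have e3 : ⟪ζ, J u⟫ = -⟪J ζ, u⟫ := by rw [hskew]; ring_nf
    have e4 : ⟪J ζ, J u⟫ = ⟪ζ, u⟫ := hJg ζ u
    rw [e1, e2, e3, e4]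
    simp only [map_smul, map_sub, map_add, hJ2]
    module
  · intro X hX Y hY v hv
    rw [hQapp, hQapp, hζm Y hY, hJζm Y hY, hζm X hX, hJζm X hX]
    have e5 : ⟪J Y, X⟫ = -⟪J X, Y⟫ := by
      rw [hskew, real_inner_comm]
    simp only [zero_smul, sub_zero, inner_add_left, real_inner_smul_left]
    rw [e5, real_inner_comm Y X, hζ]
    ring
end
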